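/- arXiv:2601.01567 — 5 statements merged into one kernel-verified Lean document; each statement's English description precedes it below -/
import Mathlib

section
/- Let X be a real Banach space with weak-ANP-III, i.e., every sequence (x_n) in the unit sphere S_X that is asymptotically normed by B_{X*} (meaning: for every ε > 0 there exists f in the closed unit ball of X* such that f(x_n) > 1 − ε for all but finitely many n) satisfies ⋂_{n} closure(convexHull{x_k : k ≥ n}) ≠ ∅ (norm closure). Then X is reflexive. -/
/-!
If `X` is not reflexive, Hahn–Banach in `X**` gives `F` of norm one and `Φ ∈ B_{X***}` with
`Φ F = d > 0` and `Φ ∘ J = 0`. Helly's lemma (the finite form of Goldstine's theorem), applied in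
turn to `F` and to `Φ`, builds `x_n ∈ B_X` and `g_n ∈ B_{X*}` with `g_m x_k ≈ F g_m ≈ d` for
`k > m` and `g_m x_k ≈ 0` for `k ≤ m`, while the `x_n` nearly attain functionals `f_i` norming
`F`, so that their normalizations `y_n` are asymptotically normed. A common point `z` of the sets
`closure (convexHull {y_k | k ≥ n})` would satisfy `g_m z ≳ d` for all `m`, yet `g_m z ≈ 0` once
`m` bounds the indices of a convex combination of the `y_k` close to `z`.
-/

open NormedSpace Filter Topology Set

theorem exists_seq_of_forall_fin_exists {α : Type*} {P : ∀ n : ℕ, (Fin n → α) → α → Prop}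
    (h : ∀ n prev, ∃ a, P n prev a) : ∃ a : ℕ → α, ∀ n, P n (fun i => a i) (a n) := by
  choose step hstep using h
  refine ⟨Nat.strongRec fun n prev => step n fun i => prev i i.2, fun n => ?_⟩
  dsimp only
  rw [Nat.strongRec_eq]
  exact hstep _ _

theorem LinearMap.eq_zero_of_forall_apply_lt {M : Type*} [AddCommGroup M] [Module ℝ M]
    (ℓ : M →ₗ[ℝ] ℝ) {u : ℝ} (h : ∀ x, ℓ x < u) : ℓ = 0 := by
  ext x
  by_contra hx
  have := h ((u / ℓ x) • x)
  rw [map_smul, smul_eq_mul, div_mul_cancel₀ _ hx] at this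
  exact this.false

section RealNormedSpace

variable {E : Type*} [NormedAddCommGroup E] [NormedSpace ℝ E]

theorem ContinuousLinearMap.norm_le_of_forall_norm_le_one_apply_le (g : StrongDual ℝ E) {u : ℝ}
    (h : ∀ x, ‖x‖ ≤ 1 → g x ≤ u) : ‖g‖ ≤ u := by
  have hu : 0 ≤ u := by simpa using h 0
  refine g.opNorm_le_of_unit_norm hu fun x hx => abs_le.2 ⟨?_, h x hx.le⟩
  simpa [neg_le] using h (-x) (by rw [norm_neg, hx])

theorem ContinuousLinearMap.exists_norm_le_one_lt_apply (g : StrongDual ℝ E) {r : ℝ}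
    (hr : r < ‖g‖) : ∃ x, ‖x‖ ≤ 1 ∧ r < g x := by
  obtain ⟨x, hx, hrx⟩ := g.exists_lt_apply_of_lt_opNorm hr
  rcases le_or_gt 0 (g x) with hgx | hgx
  · exact ⟨x, hx.le, by rwa [Real.norm_of_nonneg hgx] at hrx⟩
  · exact ⟨-x, by rw [norm_neg]; exact hx.le, by rwa [Real.norm_of_nonpos hgx.le, ← map_neg] at hrx⟩

theorem ContinuousLinearMap.abs_apply_sub_apply_le (g : StrongDual ℝ E) (hg : ‖g‖ ≤ 1) (x y : E) :
    |g x - g y| ≤ ‖x - y‖ := by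
  rw [← map_sub, ← Real.norm_eq_abs]
  exact (g.le_opNorm _).trans (mul_le_of_le_one_left (norm_nonneg _) hg)

theorem apply_comp_pi {ι : Type*} [Fintype ι] (Φ : StrongDual ℝ (StrongDual ℝ E))
    (f : ι → StrongDual ℝ E) (φ : StrongDual ℝ (ι → ℝ)) :
    Φ (φ.comp (ContinuousLinearMap.pi f)) = φ fun i => Φ (f i) := by
  classical
  have key : ∀ y, φ y = ∑ i, y i • φ (fun j => if i = j then 1 else 0) :=
    φ.toLinearMap.pi_apply_eq_sum_univ
  have hφ : φ.comp (ContinuousLinearMap.pi f) =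
      ∑ i, φ (fun j => if i = j then 1 else 0) • f i := by
    ext x
    simp [key (fun i => f i x), mul_comm]
  rw [hφ, map_sum, key]
  simp [mul_comm]

/-- Helly's lemma, the finite form of Goldstine's theorem. -/
theorem exists_norm_le_one_forall_abs_sub_lt (Φ : StrongDual ℝ (StrongDual ℝ E)) (hΦ : ‖Φ‖ ≤ 1)
    (s : Finset (StrongDual ℝ E)) {ε : ℝ} (hε : 0 < ε) :
    ∃ x : E, ‖x‖ ≤ 1 ∧ ∀ f ∈ s, |f x - Φ f| < ε := by
  let T : E →L[ℝ] (s → ℝ) := ContinuousLinearMap.pi fun f => f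
  let c : s → ℝ := fun f => Φ f
  suffices hc : c ∈ closure (T '' Metric.closedBall 0 1) by
    obtain ⟨_, ⟨x, hx, rfl⟩, hcx⟩ := Metric.mem_closure_iff.1 hc ε hε
    refine ⟨x, mem_closedBall_zero_iff.1 hx, fun f hf => ?_⟩
    have := (dist_le_pi_dist c (T x) ⟨f, hf⟩).trans_lt hcx
    rwa [Real.dist_eq, abs_sub_comm] at this
  by_contra hc
  obtain ⟨φ, u, hφ, hu⟩ := geometric_hahn_banach_closed_point
    ((convex_closedBall 0 1).linear_image T.toLinearMap).closure isClosed_closure hc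
  have hφT : ‖φ.comp T‖ ≤ u := (φ.comp T).norm_le_of_forall_norm_le_one_apply_le fun x hx =>
    (hφ _ (subset_closure ⟨x, mem_closedBall_zero_iff.2 hx, rfl⟩)).le
  have : φ c ≤ u := calc
    φ c = Φ (φ.comp T) := (apply_comp_pi Φ _ φ).symm
    _ ≤ ‖Φ‖ * ‖φ.comp T‖ := (le_abs_self _).trans (Φ.le_opNorm _)
    _ ≤ u := by nlinarith [norm_nonneg Φ, norm_nonneg (φ.comp T)]
  exact this.not_gt hu

theorem norm_inv_norm_smul_sub_self {x : E} (hx : x ≠ 0) : ‖‖x‖⁻¹ • x - x‖ = |1 - ‖x‖| := by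
  have hx' : ‖x‖ ≠ 0 := norm_ne_zero_iff.2 hx
  have hsmul : ‖x‖⁻¹ • x - x = (‖x‖⁻¹ - 1) • x := by rw [sub_smul, one_smul]
  rw [hsmul, norm_smul, Real.norm_eq_abs, ← abs_norm x, ← abs_mul, abs_norm, sub_mul,
    inv_mul_cancel₀ hx', one_mul]

theorem LinearIsometry.exists_separating_of_not_surjective {X Y : Type*} [NormedAddCommGroup X]
    [NormedSpace ℝ X] [CompleteSpace X] [NormedAddCommGroup Y] [NormedSpace ℝ Y] (T : X →ₗᵢ[ℝ] Y)
    (hT : ¬ Function.Surjective T) :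
    ∃ y : Y, ‖y‖ = 1 ∧ ∃ Φ : StrongDual ℝ Y, ‖Φ‖ ≤ 1 ∧ (∀ x, Φ (T x) = 0) ∧ 0 < Φ y := by
  obtain ⟨y, hy⟩ : ∃ y, y ∉ range T := by
    by_contra! hsurj
    exact hT hsurj
  have hconv : Convex ℝ (range T) := by
    rw [← image_univ]
    exact convex_univ.linear_image T.toLinearMap
  obtain ⟨φ, u, hφ, hu⟩ :=
    geometric_hahn_banach_closed_point hconv T.isometry.isClosedEmbedding.isClosed_range hy
  have hφT : ∀ x, φ (T x) = 0 := LinearMap.congr_fun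
    ((φ.toLinearMap.comp T.toLinearMap).eq_zero_of_forall_apply_lt fun x => hφ _ ⟨x, rfl⟩)
  have hφy : 0 < φ y := by simpa using (hφ _ ⟨0, rfl⟩).trans hu
  have hy0 : y ≠ 0 := by rintro rfl; simp at hφy
  have hφ0 : φ ≠ 0 := by rintro rfl; simp at hφy
  refine ⟨‖y‖⁻¹ • y, norm_smul_inv_norm hy0, ‖φ‖⁻¹ • φ, (norm_smul_inv_norm hφ0).le,
    fun x => by simp [hφT], ?_⟩
  have := norm_pos_iff.2 hy0
  have := norm_pos_iff.2 hφ0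
  simp only [map_smul, FunLike.coe_smul, Pi.smul_apply, smul_eq_mul]
  positivity

end RealNormedSpace

section Bidual

variable {X : Type*} [NormedAddCommGroup X] [NormedSpace ℝ X]

def IsAsymptoticallyNormed (x : ℕ → X) : Prop :=
  ∀ ε : ℝ, 0 < ε → ∃ f : StrongDual ℝ X, ‖f‖ ≤ 1 ∧ ∀ᶠ n in atTop, 1 - ε < f (x n)

theorem isAsymptoticallyNormed_of_forall_le {x : ℕ → X} (f : ℕ → StrongDual ℝ X)
    (hf : ∀ i, ‖f i‖ ≤ 1) {δ : ℕ → ℝ} (hδ : Tendsto δ atTop (𝓝 0))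
    (hfx : ∀ i n, i ≤ n → 1 - δ i < f i (x n)) : IsAsymptoticallyNormed x := by
  intro ε hε
  obtain ⟨i, hi⟩ := (hδ.eventually (gt_mem_nhds hε)).exists
  exact ⟨f i, hf i, eventually_atTop.2 ⟨i, fun n hn => by linarith [hfx i n hn]⟩⟩

theorem IsAsymptoticallyNormed.of_tendsto_norm_sub {x y : ℕ → X} (hx : IsAsymptoticallyNormed x)
    (hxy : Tendsto (fun n => ‖y n - x n‖) atTop (𝓝 0)) : IsAsymptoticallyNormed y := by
  intro ε hε
  obtain ⟨f, hf, hfx⟩ := hx (ε / 2) (half_pos hε)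
  refine ⟨f, hf, ?_⟩
  filter_upwards [hfx, hxy.eventually (gt_mem_nhds (half_pos hε))] with n hfxn hxyn
  linarith [abs_le.1 (f.abs_apply_sub_apply_le hf (y n) (x n))]

theorem iInter_closure_convexHull_eq_empty (y : ℕ → X) (g : ℕ → StrongDual ℝ X)
    (hg : ∀ m, ‖g m‖ ≤ 1) {a b : ℝ} (hab : a < b) (hle : ∀ m k, k ≤ m → g m (y k) ≤ a)
    (hge : ∀ m k, m < k → b ≤ g m (y k)) :
    ⋂ n, closure (convexHull ℝ (y '' Ici n)) = ∅ := by
  classical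
  refine eq_empty_of_forall_notMem fun z hz => ?_
  rw [mem_iInter] at hz
  obtain ⟨w, hw, hzw⟩ := Metric.mem_closure_iff.1 (hz 0) (b - a) (sub_pos.2 hab)
  rw [convexHull_eq_union_convexHull_finite_subsets, mem_iUnion₂] at hw
  obtain ⟨t, ht, hwt⟩ := hw
  obtain ⟨s, -, rfl⟩ := Finset.subset_set_image_iff.1 ht
  set m := s.sup id
  have hgw : g m w ≤ a := by
    refine convexHull_min ?_ (convex_halfSpace_le (g m).isLinear a) hwt
    rw [Finset.coe_image]
    rintro _ ⟨k, hk, rfl⟩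
    exact hle m k (Finset.le_sup (f := id) hk)
  have hgz : b ≤ g m z := by
    refine closure_minimal (convexHull_min ?_ (convex_halfSpace_ge (g m).isLinear b))
      (isClosed_le continuous_const (g m).continuous) (hz (m + 1))
    rintro _ ⟨k, hk, rfl⟩
    exact hge m k hk
  have := abs_le.1 ((g m).abs_apply_sub_apply_le (hg m) z w)
  rw [← dist_eq_norm] at this
  linarith

theorem exists_approx_of_not_surjective_inclusionInDoubleDual [CompleteSpace X]
    (hJ : ¬ Function.Surjective (inclusionInDoubleDual ℝ X)) :
    ∃ F : StrongDual ℝ (StrongDual ℝ X), ‖F‖ = 1 ∧ ∃ d > 0, ∀ (t : Finset X) (ε : ℝ), 0 < ε →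
      ∃ g : StrongDual ℝ X, ‖g‖ ≤ 1 ∧ |F g - d| < ε ∧ ∀ y ∈ t, |g y| < ε := by
  classical
  obtain ⟨F, hF, Φ, hΦ, hΦJ, hΦF⟩ := LinearIsometry.exists_separating_of_not_surjective
    (Y := StrongDual ℝ (StrongDual ℝ X)) (inclusionInDoubleDualLi ℝ) hJ
  refine ⟨F, hF, Φ F, hΦF, fun t ε hε => ?_⟩
  obtain ⟨g, hg, hgs⟩ := exists_norm_le_one_forall_abs_sub_lt Φ hΦ
    (insert F (t.image (inclusionInDoubleDualLi ℝ))) hε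
  refine ⟨g, hg, hgs F (Finset.mem_insert_self _ _), fun y hy => ?_⟩
  have := hgs _ (Finset.mem_insert_of_mem (Finset.mem_image_of_mem _ hy))
  rwa [hΦJ, sub_zero] at this

theorem exists_unit_seq_of_forall_lt_apply {x : ℕ → X} (hx : ∀ n, ‖x n‖ ≤ 1)
    (f : ℕ → StrongDual ℝ X) (hf : ∀ i, ‖f i‖ ≤ 1) {δ : ℕ → ℝ} (hδ1 : ∀ n, δ n ≤ 1)
    (hδ : Tendsto δ atTop (𝓝 0)) (hfx : ∀ i n, i ≤ n → 1 - δ i < f i (x n)) :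
    ∃ y : ℕ → X, (∀ n, ‖y n‖ = 1) ∧ (∀ n, ‖y n - x n‖ < δ n) ∧ IsAsymptoticallyNormed y := by
  have hfxx : ∀ n, 1 - δ n < ‖x n‖ := fun n =>
    (hfx n n le_rfl).trans_le ((le_abs_self _).trans (((f n).le_opNorm _).trans
      (mul_le_of_le_one_left (norm_nonneg _) (hf n))))
  have hx0 : ∀ n, x n ≠ 0 := fun n => norm_pos_iff.1 (by linarith [hfxx n, hδ1 n])
  have hyx : ∀ n, ‖‖x n‖⁻¹ • x n - x n‖ < δ n := fun n => by
    rw [norm_inv_norm_smul_sub_self (hx0 n), abs_of_nonneg (sub_nonneg.2 (hx n))]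
    linarith [hfxx n]
  refine ⟨fun n => ‖x n‖⁻¹ • x n, fun n => norm_smul_inv_norm (hx0 n), hyx, ?_⟩
  exact (isAsymptoticallyNormed_of_forall_le f hf hδ hfx).of_tendsto_norm_sub
    (squeeze_zero (fun n => norm_nonneg _) (fun n => (hyx n).le) hδ)

theorem exists_seq_approx_bidual (F : StrongDual ℝ (StrongDual ℝ X)) (hF : ‖F‖ ≤ 1) {d : ℝ}
    (hd : ∀ (t : Finset X) (ε : ℝ), 0 < ε →
      ∃ g : StrongDual ℝ X, ‖g‖ ≤ 1 ∧ |F g - d| < ε ∧ ∀ y ∈ t, |g y| < ε)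
    (f : ℕ → StrongDual ℝ X) {ε : ℕ → ℝ} (hε : ∀ n, 0 < ε n) :
    ∃ (x : ℕ → X) (g : ℕ → StrongDual ℝ X), (∀ n, ‖x n‖ ≤ 1) ∧ (∀ n, ‖g n‖ ≤ 1) ∧
      (∀ i n, i ≤ n → |f i (x n) - F (f i)| < ε n) ∧
      (∀ i n, i < n → |g i (x n) - F (g i)| < ε n) ∧ (∀ n, |F (g n) - d| < ε n) ∧
      ∀ i n, i ≤ n → |g n (x i)| < ε n := by
  classical
  obtain ⟨p, hp⟩ := exists_seq_of_forall_fin_exists (α := X × StrongDual ℝ X)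
    (P := fun n prev xg => ‖xg.1‖ ≤ 1 ∧ ‖xg.2‖ ≤ 1 ∧ (∀ i ≤ n, |f i xg.1 - F (f i)| < ε n) ∧
      (∀ i : Fin n, |(prev i).2 xg.1 - F (prev i).2| < ε n) ∧ |F xg.2 - d| < ε n ∧
      ∀ y ∈ insert xg.1 (Finset.univ.image fun i => (prev i).1), |xg.2 y| < ε n)
    fun n prev => by
      obtain ⟨x, hx, hxs⟩ := exists_norm_le_one_forall_abs_sub_lt F hF
        ((Finset.range (n + 1)).image f ∪ Finset.univ.image fun i => (prev i).2) (hε n)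
      obtain ⟨g, hg, hgF, hgt⟩ := hd (insert x (Finset.univ.image fun i => (prev i).1)) _ (hε n)
      refine ⟨(x, g), hx, hg, fun i hi => hxs _ ?_, fun i => hxs _ ?_, hgF, hgt⟩
      · exact Finset.mem_union_left _ (Finset.mem_image_of_mem _ (Finset.mem_range_succ_iff.2 hi))
      · exact Finset.mem_union_right _ (Finset.mem_image_of_mem _ (Finset.mem_univ i))
  refine ⟨fun n => (p n).1, fun n => (p n).2, fun n => (hp n).1, fun n => (hp n).2.1,
    fun i n => (hp n).2.2.1 i, fun i n hi => (hp n).2.2.2.1 ⟨i, hi⟩, fun n => (hp n).2.2.2.2.1,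
    fun i n hi => (hp n).2.2.2.2.2 _ ?_⟩
  rcases hi.lt_or_eq with hi | rfl
  · exact Finset.mem_insert_of_mem (Finset.mem_image_of_mem (fun j : Fin n => (p j).1)
      (Finset.mem_univ ⟨i, hi⟩))
  · exact Finset.mem_insert_self _ _

theorem exists_seq_isAsymptoticallyNormed_iInter_eq_empty (F : StrongDual ℝ (StrongDual ℝ X))
    (hF : ‖F‖ = 1) {d : ℝ} (hd : 0 < d)
    (hFd : ∀ (t : Finset X) (ε : ℝ), 0 < ε →
      ∃ g : StrongDual ℝ X, ‖g‖ ≤ 1 ∧ |F g - d| < ε ∧ ∀ y ∈ t, |g y| < ε) :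
    ∃ y : ℕ → X, (∀ n, ‖y n‖ = 1) ∧ IsAsymptoticallyNormed y ∧
      ⋂ n, closure (convexHull ℝ (y '' Ici n)) = ∅ := by
  -- All errors below are multiples of `η`; `8 * η ≤ d` separates `3 * η` from `d - 4 * η`.
  obtain ⟨η, hη, hηd, hη1⟩ : ∃ η : ℝ, 0 < η ∧ 8 * η ≤ d ∧ 8 * η ≤ 1 :=
    ⟨min d 1 / 8, by positivity, by linarith [min_le_left d 1], by linarith [min_le_right d 1]⟩
  set ε : ℕ → ℝ := fun n => η / (n + 1)
  have hε : ∀ n, 0 < ε n := fun n => by positivity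
  have hεη : ∀ n, ε n ≤ η := fun n => div_le_self hη.le (by simp)
  have hεanti : Antitone ε := fun m n hmn => by dsimp only [ε]; gcongr
  have hεlim : Tendsto (fun n => 2 * ε n) atTop (𝓝 0) := by
    simpa [ε, div_eq_mul_inv, mul_assoc] using
      tendsto_one_div_add_atTop_nhds_zero_nat.const_mul (2 * η)
  choose f hf hFf using fun i => F.exists_norm_le_one_lt_apply (r := 1 - ε i) (by linarith [hε i])
  obtain ⟨x, g, hx, hg, hfx, hgxF, hFg, hgx0⟩ := exists_seq_approx_bidual F hF.le hFd f hε
  have hfx' : ∀ i n, i ≤ n → 1 - 2 * ε i < f i (x n) := fun i n hin => by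
    linarith [abs_lt.1 (hfx i n hin), hFf i, hεanti hin]
  obtain ⟨y, hy1, hyx, hyAN⟩ := exists_unit_seq_of_forall_lt_apply hx f hf
    (fun n => by linarith [hεη n, hη1]) hεlim hfx'
  refine ⟨y, hy1, hyAN, iInter_closure_convexHull_eq_empty y g hg (a := 3 * η) (b := d - 4 * η)
    (by linarith) (fun m k hkm => ?_) (fun m k hmk => ?_)⟩
  · linarith [abs_le.1 ((g m).abs_apply_sub_apply_le (hg m) (y k) (x k)), abs_lt.1 (hgx0 k m hkm),
      hyx k, hεη k, hεη m]
  · linarith [abs_le.1 ((g m).abs_apply_sub_apply_le (hg m) (y k) (x k)), abs_lt.1 (hgxF m k hmk),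
      abs_lt.1 (hFg m), hyx k, hεη k, hεη m]

end Bidual

/-- If every sequence in the unit sphere of `X` that is asymptotically
normed by the closed unit ball of `X*` satisfies
`⋂ n, closure (convexHull {x k : k ≥ n}) ≠ ∅`, then `X` is reflexive, i.e. the canonical
embedding of `X` into its bidual is surjective. -/
theorem stmt_0 {X : Type*} [NormedAddCommGroup X] [NormedSpace ℝ X] [CompleteSpace X]
    (h : ∀ x : ℕ → X, (∀ n, ‖x n‖ = 1) →
      (∀ ε : ℝ, 0 < ε → ∃ f : StrongDual ℝ X, ‖f‖ ≤ 1 ∧ ∀ᶠ n in atTop, 1 - ε < f (x n)) →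
      (⋂ n : ℕ, closure (convexHull ℝ (x '' Set.Ici n))).Nonempty) :
    Function.Surjective (inclusionInDoubleDual ℝ X) := by
  by_contra hJ
  obtain ⟨F, hF, d, hd, hFd⟩ := exists_approx_of_not_surjective_inclusionInDoubleDual hJ
  obtain ⟨y, hy1, hyAN, hy⟩ := exists_seq_isAsymptoticallyNormed_iInter_eq_empty F hF hd hFd
  exact (h y hy1 hyAN).ne_empty hy
end

section
/- The Banach space ℓ∞ of bounded real sequences with the supremum norm is not weakly Hahn-Banach smooth: there exists Λ ∈ (ℓ∞)* attaining its norm on the closed unit ball of ℓ∞ and two distinct functionals G₁ ≠ G₂ in (ℓ∞)*** such that G₁ ∘ ι_{ℓ∞} = G₂ ∘ ι_{ℓ∞} = Λ and ‖G₁‖ = ‖G₂‖ = ‖Λ‖, where ι_{ℓ∞} : ℓ∞ → (ℓ∞)** is the canonical embedding into the bidual. -/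
/-!
`ℓ∞` is `1`-complemented in its bidual: `P Ψ = (Ψ δₘ)ₘ` is a norm-one left inverse of the
canonical embedding, so for every `Λ ∈ (ℓ∞)*` both the canonical image of `Λ` and `Λ ∘ P` are
norm-preserving extensions of `Λ` to `(ℓ∞)**`. Take for `Λ` the limit along a free ultrafilter
`𝒰`, which has norm one and attains it at `1`. The two extensions differ at
`Ψ f = lim_{n → 𝒰} f (1_{[n, ∞)})`: the tails `1_{[n, ∞)}` are cofinitely `1`, so `Ψ Λ = 1`,
while each coordinate `δₘ` vanishes on them for `n > m`, so `P Ψ = 0`.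
-/

open NormedSpace Filter Topology

noncomputable section

/-- The space `ℓ∞` of bounded real sequences with the supremum norm. -/
abbrev ellInfty : Type := lp (fun _ : ℕ => ℝ) ⊤

/-- The operator norm on the triple dual of `ℓ∞` (instance search no longer finds it by itself). -/
instance : Norm (StrongDual ℝ (StrongDual ℝ (StrongDual ℝ ellInfty))) :=
  ContinuousLinearMap.hasOpNorm (E := StrongDual ℝ (StrongDual ℝ ellInfty)) (F := ℝ) (σ₁₂ := RingHom.id ℝ)

open scoped ENNReal lp

section UltrafilterLimit

variable {ι : Type*} (𝒰 : Ultrafilter ι)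

theorem exists_tendsto_ultrafilter (x : ℓ^∞(ι, ℝ)) : ∃ c, Tendsto (x : ι → ℝ) 𝒰 (𝓝 c) := by
  obtain ⟨c, -, hc⟩ := (isCompact_closedBall (0 : ℝ) ‖x‖).ultrafilter_le_nhds' (𝒰.map x)
    (Ultrafilter.mem_map.2 <| univ_mem' fun i => by
      simpa using lp.norm_apply_le_norm ENNReal.top_ne_zero x i)
  exact ⟨c, hc⟩

theorem tendsto_limUnder_ultrafilter (x : ℓ^∞(ι, ℝ)) :
    Tendsto (x : ι → ℝ) 𝒰 (𝓝 (limUnder (𝒰 : Filter ι) x)) :=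
  tendsto_nhds_limUnder (exists_tendsto_ultrafilter 𝒰 x)

def ultrafilterLim : StrongDual ℝ ℓ^∞(ι, ℝ) :=
  LinearMap.mkContinuous
    { toFun x := limUnder (𝒰 : Filter ι) x
      map_add' x y := ((tendsto_limUnder_ultrafilter 𝒰 x).add
        (tendsto_limUnder_ultrafilter 𝒰 y)).limUnder_eq
      map_smul' c x := ((tendsto_limUnder_ultrafilter 𝒰 x).const_smul c).limUnder_eq } 1
    fun x => by
      rw [one_mul]
      exact le_of_tendsto' (tendsto_limUnder_ultrafilter 𝒰 x).norm
        (lp.norm_apply_le_norm ENNReal.top_ne_zero x)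

variable {𝒰}

theorem ultrafilterLim_eq_of_eventually_eq {x : ℓ^∞(ι, ℝ)} {c : ℝ} (h : ∀ᶠ i in 𝒰, x i = c) :
    ultrafilterLim 𝒰 x = c :=
  tendsto_nhds_unique (tendsto_limUnder_ultrafilter 𝒰 x)
    (tendsto_const_nhds.congr' (h.mono fun _ => Eq.symm))

theorem ultrafilterLim_one : ultrafilterLim 𝒰 1 = 1 :=
  ultrafilterLim_eq_of_eventually_eq (univ_mem' fun _ => rfl)

theorem norm_ultrafilterLim : ‖ultrafilterLim 𝒰‖ = 1 := by
  have : Nonempty ι := nonempty_of_neBot (𝒰 : Filter ι)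
  refine le_antisymm (LinearMap.mkContinuous_norm_le _ zero_le_one _) ?_
  simpa [ultrafilterLim_one] using (ultrafilterLim 𝒰).le_opNorm 1

end UltrafilterLimit

section FamilyEval

variable {ι E : Type*} [NormedAddCommGroup E] [NormedSpace ℝ E]

def familyEval (f : ι → StrongDual ℝ E) (hf : ∀ i, ‖f i‖ ≤ 1) : E →L[ℝ] ℓ^∞(ι, ℝ) :=
  LinearMap.mkContinuous
    { toFun x := ⟨fun i => f i x, memℓp_infty ⟨‖x‖, by
        rintro _ ⟨i, rfl⟩
        simpa using (f i).le_of_opNorm_le (hf i) x⟩⟩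
      map_add' x y := by ext i; exact map_add (f i) x y
      map_smul' c x := by ext i; exact map_smul (f i) c x } 1
    fun x => by
      rw [one_mul]
      exact lp.norm_le_of_forall_le (norm_nonneg x) fun i => by
        simpa using (f i).le_of_opNorm_le (hf i) x

theorem norm_familyEval_apply_le (f : ι → StrongDual ℝ E) (hf : ∀ i, ‖f i‖ ≤ 1) (x : E) :
    ‖familyEval f hf x‖ ≤ ‖x‖ :=
  ((familyEval f hf).le_of_opNorm_le (LinearMap.mkContinuous_norm_le _ zero_le_one _) x).trans_eq
    (one_mul _)

end FamilyEval

theorem norm_comp_eq_of_leftInverse {E F : Type*} [NormedAddCommGroup E] [NormedSpace ℝ E]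
    [NormedAddCommGroup F] [NormedSpace ℝ F] {j : E →L[ℝ] F} {P : F →L[ℝ] E}
    (hPj : ∀ x, P (j x) = x) (hj : ∀ x, ‖j x‖ ≤ ‖x‖) (hP : ∀ y, ‖P y‖ ≤ ‖y‖)
    (Λ : StrongDual ℝ E) : ‖Λ.comp P‖ = ‖Λ‖ := by
  refine le_antisymm (Λ.comp P |>.opNorm_le_bound (norm_nonneg _) fun y => ?_)
    (Λ.opNorm_le_bound (norm_nonneg _) fun x => ?_)
  · calc ‖Λ (P y)‖ ≤ ‖Λ‖ * ‖P y‖ := Λ.le_opNorm _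
      _ ≤ ‖Λ‖ * ‖y‖ := by gcongr; exact hP y
  · calc ‖Λ x‖ = ‖Λ.comp P (j x)‖ := by rw [Λ.comp_apply, hPj]
      _ ≤ ‖Λ.comp P‖ * ‖j x‖ := (Λ.comp P).le_opNorm _
      _ ≤ ‖Λ.comp P‖ * ‖x‖ := by gcongr; exact hj x

theorem lp.norm_evalCLM_le {ι : Type*} (m : ι) : ‖lp.evalCLM ℝ (fun _ : ι => ℝ) ∞ m‖ ≤ 1 :=
  LinearMap.mkContinuous_norm_le _ zero_le_one _

namespace ellInfty

def bidualProjection : StrongDual ℝ (StrongDual ℝ ellInfty) →L[ℝ] ellInfty :=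
  familyEval (E := StrongDual ℝ (StrongDual ℝ ellInfty))
    (fun m => inclusionInDoubleDual ℝ _ (lp.evalCLM ℝ (fun _ : ℕ => ℝ) ∞ m)) fun m =>
    (double_dual_bound ℝ _ _).trans (lp.norm_evalCLM_le m)

theorem bidualProjection_inclusionInDoubleDual (x : ellInfty) :
    bidualProjection (inclusionInDoubleDual ℝ ellInfty x) = x :=
  rfl

theorem norm_bidualProjection_apply_le (Ψ : StrongDual ℝ (StrongDual ℝ ellInfty)) :
    ‖bidualProjection Ψ‖ ≤ ‖Ψ‖ :=
  norm_familyEval_apply_le _ _ Ψ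

def tail (n : ℕ) : ellInfty :=
  ⟨(Set.Ici n).indicator 1, memℓp_infty ⟨1, by
    rintro _ ⟨m, rfl⟩
    exact (norm_indicator_le_norm_self _ _).trans_eq norm_one⟩⟩

theorem norm_tail_le (n : ℕ) : ‖tail n‖ ≤ 1 :=
  lp.norm_le_of_forall_le zero_le_one fun _ =>
    (norm_indicator_le_norm_self _ _).trans_eq norm_one

theorem eventually_tail_apply_eq_one (n : ℕ) : ∀ᶠ m in cofinite, tail n m = 1 := by
  rw [Nat.cofinite_eq_atTop]
  exact (eventually_ge_atTop n).mono fun m hm => Set.indicator_of_mem hm _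

theorem eventually_tail_apply_eq_zero (m : ℕ) : ∀ᶠ n in cofinite, tail n m = 0 := by
  rw [Nat.cofinite_eq_atTop]
  exact (eventually_gt_atTop m).mono fun n hn => Set.indicator_of_notMem (by simpa using hn) _

section TailLimit

variable (𝒰 : Ultrafilter ℕ)

def tailLimit : StrongDual ℝ (StrongDual ℝ ellInfty) :=
  (ultrafilterLim 𝒰).comp <| familyEval (E := StrongDual ℝ ellInfty)
    (fun n => inclusionInDoubleDual ℝ ellInfty (tail n))
    fun n => (double_dual_bound ℝ _ _).trans (norm_tail_le n)

variable {𝒰}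

theorem tailLimit_eq_of_eventually_eq {f : StrongDual ℝ ellInfty} {c : ℝ}
    (h : ∀ᶠ n in 𝒰, f (tail n) = c) : tailLimit 𝒰 f = c :=
  ultrafilterLim_eq_of_eventually_eq h

theorem tailLimit_ultrafilterLim (h𝒰 : (𝒰 : Filter ℕ) ≤ cofinite) :
    tailLimit 𝒰 (ultrafilterLim 𝒰) = 1 :=
  tailLimit_eq_of_eventually_eq <| Eventually.of_forall fun n =>
    ultrafilterLim_eq_of_eventually_eq (h𝒰 (eventually_tail_apply_eq_one n))

theorem bidualProjection_tailLimit (h𝒰 : (𝒰 : Filter ℕ) ≤ cofinite) :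
    bidualProjection (tailLimit 𝒰) = 0 := by
  ext m
  exact tailLimit_eq_of_eventually_eq (h𝒰 (eventually_tail_apply_eq_zero m))

theorem inclusionInDoubleDual_ne_comp_bidualProjection (h𝒰 : (𝒰 : Filter ℕ) ≤ cofinite) :
    inclusionInDoubleDual ℝ _ (ultrafilterLim 𝒰) ≠ (ultrafilterLim 𝒰).comp bidualProjection := by
  intro h
  have h_one : inclusionInDoubleDual ℝ _ (ultrafilterLim 𝒰) (tailLimit 𝒰) = 1 :=
    tailLimit_ultrafilterLim h𝒰
  rw [h, ContinuousLinearMap.comp_apply, bidualProjection_tailLimit h𝒰, map_zero] at h_one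
  exact zero_ne_one h_one

end TailLimit

end ellInfty

open ellInfty

/-- `ℓ∞` is not weakly Hahn-Banach smooth: there is a norm-attaining
functional `Λ ∈ (ℓ∞)*` admitting two distinct norm-preserving extensions to `(ℓ∞)**`,
i.e. two distinct `G₁, G₂ ∈ (ℓ∞)***` restricting to `Λ` along the canonical embedding
`ι : ℓ∞ → (ℓ∞)**` and with `‖G₁‖ = ‖G₂‖ = ‖Λ‖`. -/
theorem stmt_2 :
    ∃ Λ : StrongDual ℝ ellInfty,
      (∃ x : ellInfty, ‖x‖ = 1 ∧ |Λ x| = ‖Λ‖) ∧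
      ∃ G₁ G₂ : StrongDual ℝ (StrongDual ℝ (StrongDual ℝ ellInfty)),
        G₁ ≠ G₂ ∧
        (∀ x : ellInfty, G₁ (inclusionInDoubleDual ℝ ellInfty x) = Λ x) ∧
        (∀ x : ellInfty, G₂ (inclusionInDoubleDual ℝ ellInfty x) = Λ x) ∧
        ‖G₁‖ = ‖Λ‖ ∧ ‖G₂‖ = ‖Λ‖ := by
  set Λ := ultrafilterLim (hyperfilter ℕ)
  refine ⟨Λ, ⟨1, norm_one, by rw [ultrafilterLim_one, norm_ultrafilterLim, abs_one]⟩,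
    inclusionInDoubleDual ℝ _ Λ, Λ.comp bidualProjection,
    inclusionInDoubleDual_ne_comp_bidualProjection hyperfilter_le_cofinite,
    fun _ => rfl, fun x => congrArg Λ (bidualProjection_inclusionInDoubleDual x),
    (inclusionInDoubleDualLi ℝ).norm_map Λ, ?_⟩
  exact norm_comp_eq_of_leftInverse bidualProjection_inclusionInDoubleDual
    (double_dual_bound ℝ _) norm_bidualProjection_apply_le Λ
end
end

section
/- Fix 0 < r < 1. Define ν : ℓ1 → ℝ by ν(a) = r·|Σ_{n=1}^∞ a_n| + Σ_{n=2}^∞ |a_n| for a = (a_n) ∈ ℓ1, and define the linear map T : ℓ1 → ℓ1 by T(a) = (r·Σ_{n=1}^∞ a_n, a_2, a_3, …). Then ν is a norm on ℓ1, T is a linear bijection of ℓ1 onto ℓ1, and ‖T(a)‖₁ = ν(a) for every a ∈ ℓ1; in other words, (ℓ1, ν) is isometrically isomorphic to (ℓ1, ‖·‖₁). -/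
/-!
`T` overwrites the first coordinate of `a` by `r • ∑ aₙ`. Overwriting the first coordinate `b₀` of
`b` by `(r⁻¹ + 1) • b₀ - ∑ bₙ` inverts it, because overwriting the first coordinate by `x` changes
the total sum by `x - a₀`. Since `‖T a‖₁ = |r| |∑ aₙ| + ∑_{n ≥ 1} |aₙ| = ν a`, the functional `ν` is
the pull-back of the `ℓ¹` norm along a linear bijection, hence a norm.
-/

open scoped lp

namespace lp

variable {𝕜 E : Type*} [NormedField 𝕜] [NormedAddCommGroup E] [NormedSpace 𝕜 E]

theorem norm_eq_norm_apply_zero_add_tsum (a : ℓ¹(ℕ, E)) :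
    ‖a‖ = ‖a 0‖ + ∑' n, ‖a (n + 1)‖ := by
  have hs : Summable fun n => ‖a n‖ := by simpa using a.2.summable
  rw [norm_eq_tsum_rpow (by norm_num)]
  simpa using hs.tsum_eq_zero_add

noncomputable def updateZero (φ : ℓ¹(ℕ, E) →ₗ[𝕜] E) : ℓ¹(ℕ, E) →ₗ[𝕜] ℓ¹(ℕ, E) :=
  LinearMap.id + lsingle 1 0 ∘ₗ (φ - evalₗ _ 1 0)

@[simp]
theorem updateZero_apply_zero (φ : ℓ¹(ℕ, E) →ₗ[𝕜] E) (a : ℓ¹(ℕ, E)) :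
    updateZero φ a 0 = φ a := by
  simp [updateZero]

@[simp]
theorem updateZero_apply_succ (φ : ℓ¹(ℕ, E) →ₗ[𝕜] E) (a : ℓ¹(ℕ, E)) (n : ℕ) :
    updateZero φ a (n + 1) = a (n + 1) := by
  simp [updateZero, lp.single_apply]

theorem updateZero_apply (φ : ℓ¹(ℕ, E) →ₗ[𝕜] E) (a : ℓ¹(ℕ, E)) (n : ℕ) :
    updateZero φ a n = if n = 0 then φ a else a n := by
  rcases n with _ | n <;> simp

theorem norm_updateZero (φ : ℓ¹(ℕ, E) →ₗ[𝕜] E) (a : ℓ¹(ℕ, E)) :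
    ‖updateZero φ a‖ = ‖φ a‖ + ∑' n, ‖a (n + 1)‖ := by
  simp [norm_eq_norm_apply_zero_add_tsum (updateZero φ a)]

variable [CompleteSpace E]

theorem tsum_updateZero (φ : ℓ¹(ℕ, E) →ₗ[𝕜] E) (a : ℓ¹(ℕ, E)) :
    ∑' n, updateZero φ a n = ∑' n, a n + (φ a - a 0) :=
  calc ∑' n, updateZero φ a n
      = tsumCLM 𝕜 ℕ E (a + lp.single 1 0 (φ a - a 0)) := rfl
    _ = ∑' n, a n + (φ a - a 0) := by
      rw [map_add, tsumCLM_apply, tsumCLM_apply, lp.coeFn_single, tsum_pi_single]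

variable (E) in
noncomputable def tsumHead (r : 𝕜) : ℓ¹(ℕ, E) →ₗ[𝕜] ℓ¹(ℕ, E) :=
  updateZero (r • (tsumCLM 𝕜 ℕ E).toLinearMap)

variable (E) in
noncomputable def tsumHeadInv (r : 𝕜) : ℓ¹(ℕ, E) →ₗ[𝕜] ℓ¹(ℕ, E) :=
  updateZero ((r⁻¹ + 1) • evalₗ (fun _ => E) 1 0 - (tsumCLM 𝕜 ℕ E).toLinearMap)

theorem tsumHead_comp_tsumHeadInv {r : 𝕜} (hr : r ≠ 0) :
    (tsumHead E r).comp (tsumHeadInv E r) = .id := by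
  refine LinearMap.ext fun b => lp.ext <| funext fun n => ?_
  rcases n with _ | n
  · simp [tsumHead, tsumHeadInv, tsum_updateZero]
    match_scalars <;> simp [hr]
  · simp [tsumHead, tsumHeadInv]

theorem tsumHeadInv_comp_tsumHead {r : 𝕜} (hr : r ≠ 0) :
    (tsumHeadInv E r).comp (tsumHead E r) = .id := by
  refine LinearMap.ext fun a => lp.ext <| funext fun n => ?_
  rcases n with _ | n
  · simp [tsumHead, tsumHeadInv, tsum_updateZero]
    match_scalars <;> simp [add_mul, hr]
  · simp [tsumHead, tsumHeadInv]

noncomputable def tsumHeadEquiv {r : 𝕜} (hr : r ≠ 0) : ℓ¹(ℕ, E) ≃ₗ[𝕜] ℓ¹(ℕ, E) :=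
  .ofLinearMap _ _ (tsumHead_comp_tsumHeadInv hr) (tsumHeadInv_comp_tsumHead hr)

theorem tsumHeadEquiv_apply {r : 𝕜} (hr : r ≠ 0) (a : ℓ¹(ℕ, E)) (n : ℕ) :
    tsumHeadEquiv hr a n = if n = 0 then r • ∑' k, a k else a n := by
  simp [tsumHeadEquiv, tsumHead, updateZero_apply]

theorem norm_tsumHeadEquiv {r : 𝕜} (hr : r ≠ 0) (a : ℓ¹(ℕ, E)) :
    ‖tsumHeadEquiv hr a‖ = ‖r‖ * ‖∑' n, a n‖ + ∑' n, ‖a (n + 1)‖ := by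
  simp [tsumHeadEquiv, tsumHead, norm_updateZero, norm_smul]

end lp

theorem stmt_3_general (r : ℝ) (hr0 : 0 < r)
    (ν : lp (fun _ : ℕ => ℝ) 1 → ℝ)
    (hν : ∀ a : lp (fun _ : ℕ => ℝ) 1,
      ν a = r * |∑' n : ℕ, a n| + ∑' n : ℕ, |a (n + 1)|) :
    (∀ a, ν a = 0 ↔ a = 0) ∧
    (∀ a b, ν (a + b) ≤ ν a + ν b) ∧
    (∀ (c : ℝ) (a), ν (c • a) = |c| * ν a) ∧
    ∃ T : lp (fun _ : ℕ => ℝ) 1 ≃ₗ[ℝ] lp (fun _ : ℕ => ℝ) 1,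
      (∀ (a) (n : ℕ), T a n = if n = 0 then r * ∑' k : ℕ, a k else a n) ∧
      ∀ a, ‖T a‖ = ν a := by
  set T := lp.tsumHeadEquiv (E := ℝ) hr0.ne'
  have hT : ∀ a, ‖T a‖ = ν a := fun a => by
    rw [hν, lp.norm_tsumHeadEquiv, Real.norm_of_nonneg hr0.le]
    simp only [Real.norm_eq_abs]
  refine ⟨fun a => ?_, fun a b => ?_, fun c a => ?_, T, lp.tsumHeadEquiv_apply _, hT⟩
  · rw [← hT, norm_eq_zero, T.map_eq_zero_iff]
  · simpa only [← hT, map_add] using norm_add_le (T a) (T b)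
  · rw [← hT, ← hT, map_smul, norm_smul, Real.norm_eq_abs]

/-- For `0 < r < 1`, the functional
`ν(a) = r⬝|Σₙ aₙ| + Σ_{n≥2} |aₙ|` is a norm on `ℓ¹` and the map
`T(a) = (r⬝Σₙ aₙ, a₂, a₃, …)` is a linear bijection of `ℓ¹` satisfying
`‖T a‖₁ = ν a`; i.e. `(ℓ¹, ν)` is isometrically isomorphic to `(ℓ¹, ‖·‖₁)`.
(Sequences are indexed by `ℕ` starting at `0`, so `a (n+1)` plays the role of
the paper's `a_{n+2}`-tail, and the `0`-th coordinate is the paper's first one.) -/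
theorem stmt_3 (r : ℝ) (hr0 : 0 < r) (hr1 : r < 1)
    (ν : lp (fun _ : ℕ => ℝ) 1 → ℝ)
    (hν : ∀ a : lp (fun _ : ℕ => ℝ) 1,
      ν a = r * |∑' n : ℕ, a n| + ∑' n : ℕ, |a (n + 1)|) :
    (∀ a, ν a = 0 ↔ a = 0) ∧
    (∀ a b, ν (a + b) ≤ ν a + ν b) ∧
    (∀ (c : ℝ) (a), ν (c • a) = |c| * ν a) ∧
    ∃ T : lp (fun _ : ℕ => ℝ) 1 ≃ₗ[ℝ] lp (fun _ : ℕ => ℝ) 1,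
      (∀ (a) (n : ℕ), T a n = if n = 0 then r * ∑' k : ℕ, a k else a n) ∧
      ∀ a, ‖T a‖ = ν a :=
  stmt_3_general r hr0 ν hν
end

section
/- Let (f_λ)_{λ} be a net in the unit sphere of ℓ1 and let f ∈ ℓ1 with ‖f‖₁ = 1. If f_λ converges to f coordinatewise, i.e., f_λ(n) → f(n) for every n, then f_λ converges to f in the weak topology σ(ℓ1, (ℓ1)*), i.e., F(f_λ) → F(f) for every continuous linear functional F on ℓ1. -/
open Filter Topology

/-!
In `ℓ¹`, coordinatewise convergence together with convergence of the norms forces norm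
convergence (a discrete Scheffé lemma): outside a finite set `s` carrying all but `ε` of the mass
of `g`, the mass of `f i` is `‖f i‖ - ∑ a ∈ s, ‖f i a‖`, which tends to the mass of `g` outside `s`.
Hence `‖f i - g‖` is eventually at most about `2ε`. Norm convergence implies weak convergence.
-/

namespace lp

variable {α : Type*} {E : α → Type*} [∀ a, NormedAddCommGroup (E a)]

theorem summable_norm_of_one (x : lp E 1) : Summable fun a => ‖x a‖ := by
  simpa using (lp.memℓp x).summable (by norm_num)

theorem norm_eq_tsum_norm_of_one (x : lp E 1) : ‖x‖ = ∑' a, ‖x a‖ := by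
  simpa using lp.norm_eq_tsum_rpow (p := 1) (by norm_num) x

theorem norm_eq_sum_add_tsum_compl_of_one (x : lp E 1) (s : Finset α) :
    ‖x‖ = ∑ a ∈ s, ‖x a‖ + ∑' a : {a // a ∉ s}, ‖x a‖ := by
  rw [norm_eq_tsum_norm_of_one, ← (summable_norm_of_one x).sum_add_tsum_compl (s := s)]
  rfl

theorem norm_sub_le_sum_add_tail_of_one (x y : lp E 1) (s : Finset α) :
    ‖x - y‖ ≤ ∑ a ∈ s, ‖x a - y a‖ + (‖x‖ - ∑ a ∈ s, ‖x a‖) + ∑' a : {a // a ∉ s}, ‖y a‖ := by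
  have hx : Summable fun a : {a // a ∉ s} => ‖x a‖ := (summable_norm_of_one x).subtype _
  have hy : Summable fun a : {a // a ∉ s} => ‖y a‖ := (summable_norm_of_one y).subtype _
  have htail : ∑' a : {a // a ∉ s}, ‖(x - y) a‖
      ≤ ∑' a : {a // a ∉ s}, ‖x a‖ + ∑' a : {a // a ∉ s}, ‖y a‖ := by
    rw [← hx.tsum_add hy]
    exact ((summable_norm_of_one (x - y)).subtype _).tsum_le_tsum
      (fun a => norm_sub_le (x a) (y a)) (hx.add hy)
  rw [norm_eq_sum_add_tsum_compl_of_one (x - y) s, norm_eq_sum_add_tsum_compl_of_one x s]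
  simp only [lp.coeFn_sub, Pi.sub_apply] at htail ⊢
  linarith

theorem tendsto_of_tendsto_apply_of_tendsto_norm_of_one {ι : Type*} {L : Filter ι}
    {f : ι → lp E 1} {g : lp E 1} (hcoord : ∀ a, Tendsto (fun i => f i a) L (𝓝 (g a)))
    (hnorm : Tendsto (fun i => ‖f i‖) L (𝓝 ‖g‖)) : Tendsto f L (𝓝 g) := by
  rw [Metric.tendsto_nhds]
  intro ε hε
  obtain ⟨s, hs⟩ := ((tendsto_tsum_compl_atTop_zero fun a => ‖g a‖).eventually
    (gt_mem_nhds (by positivity : (0 : ℝ) < ε / 3))).exists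
  set tail := ∑' a : {a // a ∉ s}, ‖g a‖
  have hdiff : Tendsto (fun i => ∑ a ∈ s, ‖f i a - g a‖) L (𝓝 0) := by
    simpa using tendsto_finsetSum s fun a _ => ((hcoord a).sub_const (g a)).norm
  have hmass : Tendsto (fun i => ‖f i‖ - ∑ a ∈ s, ‖f i a‖) L (𝓝 tail) := by
    have := hnorm.sub (tendsto_finsetSum s fun a _ => (hcoord a).norm)
    rwa [norm_eq_sum_add_tsum_compl_of_one g s, add_sub_cancel_left] at this
  have hbound := (hdiff.add hmass).add_const tail
  rw [zero_add] at hbound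
  filter_upwards [hbound.eventually (gt_mem_nhds (by linarith : tail + tail < ε))] with i hi
  rw [dist_eq_norm]
  exact (norm_sub_le_sum_add_tail_of_one (f i) g s).trans_lt hi

end lp

theorem stmt_7_general {ι : Type*} (L : Filter ι)
    (f : ι → lp (fun _ : ℕ => ℝ) 1) (g : lp (fun _ : ℕ => ℝ) 1)
    (hf : ∀ i, ‖f i‖ = 1) (hg : ‖g‖ = 1)
    (hcoord : ∀ n : ℕ, Tendsto (fun i => f i n) L (𝓝 (g n))) :
    ∀ F : StrongDual ℝ (lp (fun _ : ℕ => ℝ) 1), Tendsto (fun i => F (f i)) L (𝓝 (F g)) := by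
  have hnorm : Tendsto (fun i => ‖f i‖) L (𝓝 ‖g‖) := by
    simp only [hf, hg, tendsto_const_nhds]
  intro F
  exact (F.continuous.tendsto g).comp
    (lp.tendsto_of_tendsto_apply_of_tendsto_norm_of_one hcoord hnorm)

/-- If a net `(f_λ)` in the unit sphere of `ℓ¹` converges
coordinatewise to `f` with `‖f‖₁ = 1`, then it converges weakly to `f`. -/
theorem stmt_7 {ι : Type*} (L : Filter ι) [L.NeBot]
    (f : ι → lp (fun _ : ℕ => ℝ) 1) (g : lp (fun _ : ℕ => ℝ) 1)
    (hf : ∀ i, ‖f i‖ = 1) (hg : ‖g‖ = 1)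
    (hcoord : ∀ n : ℕ, Tendsto (fun i => f i n) L (𝓝 (g n))) :
    ∀ F : StrongDual ℝ (lp (fun _ : ℕ => ℝ) 1), Tendsto (fun i => F (f i)) L (𝓝 (F g)) :=
  stmt_7_general L f g hf hg hcoord
end

section
/- Let c0 be the Banach space of real sequences converging to 0 with the supremum norm. Then the identity map on the unit sphere S_{(c0)*} of its dual, from the relative weak-* topology σ((c0)*, c0) to the relative weak topology σ((c0)*, (c0)**), is continuous; equivalently, every net in S_{(c0)*} that converges weak-* to a point of S_{(c0)*} converges weakly to that point. -/
/-!
Under `g ↦ (g (single n))ₙ` the dual of `c₀` is `ℓ¹`, and on its unit sphere the weak-* topology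
is already the norm topology. Testing `g` against `∑_{n ∈ F} sign (g (single n)) • single n + x`
shows that on unit vectors `x` vanishing on a finite set `F`, `g` is bounded by the mass
`‖g‖ - ∑_{n ∈ F} |g (single n)|` that `g` leaves outside `F`. Choose `F` carrying all but `ε` of
the mass of `g₀`. A weak-* neighbourhood of `g₀` controls the finitely many values `g (single n)`,
`n ∈ F`; so a functional `g` in it with `‖g‖ ≤ ‖g₀‖` is close to `g₀` on `F` and leaves at most
about `ε` of its mass outside `F`, whence `‖g - g₀‖ < 3ε`. Norm convergence implies weak
convergence.
-/

open NormedSpace Filter Topology ZeroAtInfty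

noncomputable section

namespace ZeroAtInftyContinuousMap

section Norm

variable {α : Type*} [TopologicalSpace α]

theorem abs_apply_le_norm (x : C₀(α, ℝ)) (a : α) : |x a| ≤ ‖x‖ := by
  simpa [← norm_toBCF_eq_norm] using x.toBCF.norm_coe_le_norm a

theorem norm_le_of_forall_abs_apply_le {x : C₀(α, ℝ)} {C : ℝ} (hC : 0 ≤ C)
    (h : ∀ a, |x a| ≤ C) : ‖x‖ ≤ C := by
  rw [← norm_toBCF_eq_norm]
  exact (BoundedContinuousFunction.norm_le hC).2 h

end Norm

variable {α : Type*} [TopologicalSpace α] [DiscreteTopology α] [DecidableEq α]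

def single (a : α) : C₀(α, ℝ) where
  toFun := Pi.single a 1
  continuous_toFun := continuous_of_discreteTopology
  zero_at_infty' := by
    rw [cocompact_eq_cofinite]
    refine tendsto_const_nhds.congr' ?_
    filter_upwards [eventually_cofinite_ne a] with b hb
    simp [hb]

theorem sum_smul_single_apply (F : Finset α) (c : α → ℝ) (b : α) :
    (∑ a ∈ F, c a • single a) b = if b ∈ F then c b else 0 := by
  have := map_sum (AddMonoidHom.mk' (fun x : C₀(α, ℝ) => x b) fun _ _ => rfl)
    (fun a => c a • single a) F
  simp only [AddMonoidHom.mk'_apply] at this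
  rw [this]
  simp [single, Pi.single_apply]

theorem sub_sum_smul_single_apply (x : C₀(α, ℝ)) (F : Finset α) (b : α) :
    (x - ∑ a ∈ F, x a • single a) b = if b ∈ F then 0 else x b := by
  rw [sub_apply, sum_smul_single_apply]
  split_ifs <;> ring

theorem norm_sub_sum_smul_single_le {x : C₀(α, ℝ)} {F : Finset α} {δ : ℝ} (hδ : 0 ≤ δ)
    (hx : ∀ a ∉ F, |x a| ≤ δ) : ‖x - ∑ a ∈ F, x a • single a‖ ≤ δ := by
  refine norm_le_of_forall_abs_apply_le hδ fun b => ?_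
  rw [sub_sum_smul_single_apply]
  split_ifs with hb
  · simpa using hδ
  · exact hx b hb

theorem abs_apply_sum_smul_single_le (f : StrongDual ℝ C₀(α, ℝ)) {F : Finset α} {c : α → ℝ}
    (hc : ∀ a ∈ F, |c a| ≤ 1) : |f (∑ a ∈ F, c a • single a)| ≤ ∑ a ∈ F, |f (single a)| := by
  rw [map_sum]
  refine (Finset.abs_sum_le_sum_abs _ _).trans (Finset.sum_le_sum fun a ha => ?_)
  rw [map_smul, smul_eq_mul, abs_mul]
  exact mul_le_of_le_one_left (abs_nonneg _) (hc a ha)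

theorem sum_abs_apply_single_add_le_opNorm (f : StrongDual ℝ C₀(α, ℝ)) {F : Finset α}
    {x : C₀(α, ℝ)} (hx : ‖x‖ ≤ 1) (hxF : ∀ a ∈ F, x a = 0) :
    ∑ a ∈ F, |f (single a)| + f x ≤ ‖f‖ := by
  set s : α → ℝ := fun a => SignType.sign (f (single a))
  have hs : ∀ a, |s a| ≤ 1 := fun a => by
    simp only [s]
    generalize SignType.sign (f (single a)) = t
    cases t <;> simp
  have hy : ‖∑ a ∈ F, s a • single a + x‖ ≤ 1 := by
    refine norm_le_of_forall_abs_apply_le zero_le_one fun b => ?_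
    rw [add_apply, sum_smul_single_apply]
    split_ifs with hb
    · simpa [hxF b hb] using hs b
    · simpa using (abs_apply_le_norm x b).trans hx
  calc ∑ a ∈ F, |f (single a)| + f x = f (∑ a ∈ F, s a • single a + x) := by
        simp [s, map_sum, mul_comm, self_mul_sign]
    _ ≤ ‖f (∑ a ∈ F, s a • single a + x)‖ := Real.le_norm_self _
    _ ≤ ‖f‖ := f.le_of_opNorm_le_of_le le_rfl hy |>.trans_eq (mul_one _)

theorem sum_abs_apply_single_le_opNorm (f : StrongDual ℝ C₀(α, ℝ)) (F : Finset α) :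
    ∑ a ∈ F, |f (single a)| ≤ ‖f‖ := by
  simpa using sum_abs_apply_single_add_le_opNorm f (F := F) (x := 0) (by simp) (by simp)

theorem abs_apply_le_opNorm_sub_sum (f : StrongDual ℝ C₀(α, ℝ)) {F : Finset α}
    {x : C₀(α, ℝ)} (hx : ‖x‖ ≤ 1) (hxF : ∀ a ∈ F, x a = 0) :
    |f x| ≤ ‖f‖ - ∑ a ∈ F, |f (single a)| := by
  have hpos := sum_abs_apply_single_add_le_opNorm f hx hxF
  have hneg := sum_abs_apply_single_add_le_opNorm f (F := F) (x := -x) (by rwa [norm_neg])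
    (fun a ha => by simp [hxF a ha])
  rw [map_neg] at hneg
  exact abs_le.2 ⟨by linarith, by linarith⟩

theorem exists_finset_opNorm_sub_lt_sum (g : StrongDual ℝ C₀(α, ℝ)) {ε : ℝ} (hε : 0 < ε) :
    ∃ F : Finset α, ‖g‖ - ε < ∑ a ∈ F, |g (single a)| := by
  obtain ⟨x, hx, hgx⟩ := g.exists_lt_apply_of_lt_opNorm (sub_lt_self ‖g‖ (half_pos hε))
  obtain ⟨δ, hδ, hgδ⟩ : ∃ δ > 0, ‖g‖ * δ < ε / 2 := by
    refine ⟨ε / (2 * (‖g‖ + 1)), by positivity, ?_⟩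
    rw [← mul_div_assoc, div_lt_div_iff₀ (by positivity) two_pos]
    nlinarith [norm_nonneg g]
  have hfin : {a | δ ≤ |x a|}.Finite := by
    have := x.zero_at_infty'
    rw [cocompact_eq_cofinite] at this
    simpa [eventually_cofinite] using Metric.tendsto_nhds.1 this δ hδ
  refine ⟨hfin.toFinset, ?_⟩
  set xF := ∑ a ∈ hfin.toFinset, x a • single a
  have htail : ‖x - xF‖ ≤ δ :=
    norm_sub_sum_smul_single_le hδ.le fun a ha => (not_le.1 (by simpa using ha)).le
  have hhead : |g xF| ≤ ∑ a ∈ hfin.toFinset, |g (single a)| :=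
    abs_apply_sum_smul_single_le g fun a _ => (abs_apply_le_norm x a).trans hx.le
  calc ‖g‖ - ε < |g x| - ‖g‖ * δ := by rw [← Real.norm_eq_abs]; linarith
    _ ≤ |g xF| + |g (x - xF)| - ‖g‖ * δ := by
        gcongr
        simpa using abs_add_le (g xF) (g (x - xF))
    _ ≤ ∑ a ∈ hfin.toFinset, |g (single a)| := by
        have := g.le_of_opNorm_le_of_le le_rfl htail
        rw [Real.norm_eq_abs] at this
        linarith

theorem opNorm_sub_le (h g : StrongDual ℝ C₀(α, ℝ)) (F : Finset α) :
    ‖h - g‖ ≤ ∑ a ∈ F, |(h - g) (single a)| + (‖h‖ - ∑ a ∈ F, |h (single a)|) +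
      (‖g‖ - ∑ a ∈ F, |g (single a)|) := by
  have hM : 0 ≤ ∑ a ∈ F, |(h - g) (single a)| + (‖h‖ - ∑ a ∈ F, |h (single a)|) +
      (‖g‖ - ∑ a ∈ F, |g (single a)|) := by
    have := sum_abs_apply_single_le_opNorm h F
    have := sum_abs_apply_single_le_opNorm g F
    have := Finset.sum_nonneg fun a (_ : a ∈ F) => abs_nonneg ((h - g) (single a))
    linarith
  refine ContinuousLinearMap.opNorm_le_of_unit_norm hM fun x hx => ?_
  set xF := ∑ a ∈ F, x a • single a
  have htail : ‖x - xF‖ ≤ 1 :=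
    norm_sub_sum_smul_single_le zero_le_one fun a _ => hx ▸ abs_apply_le_norm x a
  have htailF : ∀ a ∈ F, (x - xF) a = 0 := fun a ha => by
    rw [sub_sum_smul_single_apply, if_pos ha]
  have hhead := abs_apply_sum_smul_single_le (h - g) (F := F) fun a _ =>
    hx ▸ abs_apply_le_norm x a
  have hh := abs_apply_le_opNorm_sub_sum h htail htailF
  have hg := abs_apply_le_opNorm_sub_sum g htail htailF
  have hsplit : (h - g) x = (h - g) xF + h (x - xF) - g (x - xF) := by
    simp only [_root_.sub_apply, map_sub]; ring
  rw [Real.norm_eq_abs, hsplit]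
  calc |(h - g) xF + h (x - xF) - g (x - xF)|
      ≤ |(h - g) xF| + |h (x - xF)| + |g (x - xF)| :=
        (abs_sub _ _).trans (by gcongr; exact abs_add_le _ _)
    _ ≤ _ := by gcongr

theorem continuousWithinAt_toStrongDual (g₀ : WeakDual ℝ C₀(α, ℝ)) :
    ContinuousWithinAt WeakDual.toStrongDual
      {g | ‖WeakDual.toStrongDual g‖ ≤ ‖WeakDual.toStrongDual g₀‖} g₀ := by
  refine (Metric.tendsto_nhds (α := StrongDual ℝ C₀(α, ℝ))).2 fun ε hε => ?_
  set G₀ := WeakDual.toStrongDual g₀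
  obtain ⟨F, hF⟩ := exists_finset_opNorm_sub_lt_sum G₀ (show 0 < ε / 3 by positivity)
  have hclose : ∀ᶠ g : WeakDual ℝ C₀(α, ℝ) in 𝓝 g₀,
      ∑ a ∈ F, |WeakDual.toStrongDual g (single a) - G₀ (single a)| < ε / 3 := by
    have hc : Continuous fun g : WeakDual ℝ C₀(α, ℝ) =>
        ∑ a ∈ F, |WeakDual.toStrongDual g (single a) - G₀ (single a)| :=
      continuous_finsetSum _ fun a _ => ((WeakDual.eval_continuous _).sub continuous_const).abs
    refine hc.continuousAt.eventually_lt continuousAt_const ?_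
    simpa [G₀] using div_pos hε three_pos
  have hmass : ∀ᶠ g : WeakDual ℝ C₀(α, ℝ) in 𝓝 g₀,
      ‖G₀‖ - ε / 3 < ∑ a ∈ F, |WeakDual.toStrongDual g (single a)| := by
    have hc : Continuous fun g : WeakDual ℝ C₀(α, ℝ) =>
        ∑ a ∈ F, |WeakDual.toStrongDual g (single a)| :=
      continuous_finsetSum _ fun a _ => (WeakDual.eval_continuous _).abs
    exact continuousAt_const.eventually_lt hc.continuousAt hF
  filter_upwards [mem_nhdsWithin_of_mem_nhds (hclose.and hmass), self_mem_nhdsWithin]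
    with g ⟨hg_close, hg_mass⟩ hg_norm
  have := opNorm_sub_le (WeakDual.toStrongDual g) G₀ F
  simp only [_root_.sub_apply] at this
  have hdist : dist (WeakDual.toStrongDual g) G₀ = ‖WeakDual.toStrongDual g - G₀‖ :=
    dist_eq_norm (WeakDual.toStrongDual g) G₀
  linarith [show ‖WeakDual.toStrongDual g‖ ≤ ‖G₀‖ from hg_norm]

end ZeroAtInftyContinuousMap

/-- The identity map on the unit sphere of `(c₀)*`, from the relative
weak-* topology `σ((c₀)*, c₀)` to the relative weak topology, is continuous. -/
theorem stmt_8 :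
    ContinuousOn
      (fun g : WeakDual ℝ C₀(ℕ, ℝ) =>
        toWeakSpace ℝ (StrongDual ℝ C₀(ℕ, ℝ)) (WeakDual.toStrongDual g))
      {g : WeakDual ℝ C₀(ℕ, ℝ) | ‖WeakDual.toStrongDual g‖ = 1} := by
  have hnorm : ContinuousOn WeakDual.toStrongDual
      {g : WeakDual ℝ C₀(ℕ, ℝ) | ‖WeakDual.toStrongDual g‖ = 1} := fun g hg =>
    (ZeroAtInftyContinuousMap.continuousWithinAt_toStrongDual g).mono fun h hh =>
      le_of_eq (hh.trans hg.symm)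
  exact (toWeakSpaceCLM ℝ (StrongDual ℝ C₀(ℕ, ℝ))).continuous.comp_continuousOn hnorm
end
end
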